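/- Let k ≥ 2 and let A_1 ≥ A_2 ≥ … ≥ A_k ≥ 0 be real numbers with A_{k+1} = 0. Suppose that for every j with 1 ≤ j ≤ k we have ∑_{i=1}^{j} A_i ≤ max(j·A_{j+1}, j−1) + j, and suppose A_1 = A_2. Then A_1 ≤ H_{k-1} + 1/2, where H_m is the m-th harmonic number. -/

import Mathlib

/-!
Write `a = A 1`, `S j = ∑_{i ≤ j} A i` and suppose `a > H_{k-1} + 1/2`. Then
`S j ≥ j (a - H_j + 3/2)` for `2 ≤ j ≤ k`: it holds at `j = 2` since `A 1 = A 2`, and it forces the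
maximum in the hypothesis at `j` to be `j A_{j+1}` (the alternative `S j ≤ 2j - 1` would give
`a ≤ H_{j-1} + 1/2`), so `A_{j+1} ≥ a - H_j + 1/2`, which is exactly what the induction step needs.
At `j = k` we have `A_{k+1} = 0`, so the alternative occurs there, a contradiction.
-/

open Finset

/-- The m-th harmonicR number H_m = ∑_{j=1}^m 1/j. -/
noncomputable def harmonicR (m : ℕ) : ℝ := ∑ j ∈ Finset.range m, 1 / (j + 1 : ℝ)

lemma harmonicR_succ (m : ℕ) : harmonicR (m + 1) = harmonicR m + 1 / (m + 1 : ℝ) := by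
  simp [harmonicR, sum_range_succ]

lemma harmonicR_two : harmonicR 2 = 3 / 2 := by
  norm_num [harmonicR, sum_range_succ]

lemma harmonicR_monotone : Monotone harmonicR := fun _ _ h =>
  sum_le_sum_of_subset_of_nonneg (range_subset_range.mpr h) fun _ _ _ => by positivity

lemma mul_sub_harmonicR_succ (m : ℕ) (c : ℝ) :
    (m + 1 : ℝ) * (c - harmonicR (m + 1)) = (m + 1 : ℝ) * (c - harmonicR m) - 1 := by
  rw [harmonicR_succ]
  field_simp
  ring

lemma le_harmonicR_add_half_of_mul_le_of_le {m : ℕ} {a s : ℝ}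
    (hlow : (m + 1 : ℝ) * (a - harmonicR (m + 1) + 3 / 2) ≤ s) (hup : s ≤ (m : ℝ) + (m + 1)) :
    a ≤ harmonicR m + 1 / 2 := by
  have h := mul_sub_harmonicR_succ m (a + 3 / 2)
  have hpos : (0 : ℝ) < m + 1 := by positivity
  nlinarith

section

variable {k : ℕ} {A : ℕ → ℝ}
  (hineq : ∀ j : ℕ, 1 ≤ j → j ≤ k →
    ∑ i ∈ Icc 1 j, A i ≤ max ((j : ℝ) * A (j + 1)) ((j : ℝ) - 1) + (j : ℝ))
  (hA : harmonicR (k - 1) + 1 / 2 < A 1)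
include hineq hA

lemma sub_harmonicR_add_half_le_of_mul_le_sum {m : ℕ} (hm : m + 1 ≤ k)
    (hS : (m + 1 : ℝ) * (A 1 - harmonicR (m + 1) + 3 / 2) ≤ ∑ i ∈ Icc 1 (m + 1), A i) :
    A 1 - harmonicR (m + 1) + 1 / 2 ≤ A (m + 2) := by
  have hj := hineq (m + 1) (by omega) hm
  push_cast at hj
  rcases le_max_iff.mp (sub_le_iff_le_add.mpr hj) with hbig | hsmall
  · have hpos : (0 : ℝ) < m + 1 := by positivity
    refine le_of_mul_le_mul_left ?_ hpos
    linarith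
  · have := le_harmonicR_add_half_of_mul_le_of_le hS (by linarith)
    have := harmonicR_monotone (show m ≤ k - 1 by omega)
    linarith

lemma mul_sub_harmonicR_le_sum (hbal : A 1 = A 2) :
    ∀ j, 2 ≤ j → j ≤ k → (j : ℝ) * (A 1 - harmonicR j + 3 / 2) ≤ ∑ i ∈ Icc 1 j, A i := by
  intro j hj
  induction j, hj using Nat.le_induction with
  | base =>
    intro _
    rw [harmonicR_two, sum_Icc_succ_top (by norm_num), Icc_self, sum_singleton, ← hbal]
    push_cast
    linarith
  | succ j hj ih =>
    intro hjk
    obtain ⟨m, rfl⟩ : ∃ m, j = m + 1 := ⟨j - 1, by omega⟩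
    have hS := ih (by omega)
    push_cast at hS ⊢
    have hnext := sub_harmonicR_add_half_le_of_mul_le_sum hineq hA (by omega) hS
    rw [sum_Icc_succ_top (by omega)]
    have h := mul_sub_harmonicR_succ (m + 1) (A 1 + 3 / 2)
    push_cast at h
    linarith

end

theorem stmt_4_general (k : ℕ) (hk : 2 ≤ k) (A : ℕ → ℝ)
    (htop : A (k + 1) = 0)
    (hineq : ∀ j : ℕ, 1 ≤ j → j ≤ k →
      ∑ i ∈ Finset.Icc 1 j, A i ≤ max ((j : ℝ) * A (j + 1)) ((j : ℝ) - 1) + (j : ℝ))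
    (hbal : A 1 = A 2) :
    A 1 ≤ harmonicR (k - 1) + 1 / 2 := by
  by_contra! hA
  have hS := mul_sub_harmonicR_le_sum hineq hA hbal k hk le_rfl
  have hk' := hineq k (by omega) le_rfl
  obtain ⟨m, rfl⟩ : ∃ m, k = m + 1 := ⟨k - 1, by omega⟩
  push_cast at hS hk'
  rw [htop, mul_zero, max_eq_right (by simp)] at hk'
  have := le_harmonicR_add_half_of_mul_le_of_le hS (by linarith)
  simp only [Nat.add_sub_cancel] at hA
  linarith

theorem stmt_4 (k : ℕ) (hk : 2 ≤ k) (A : ℕ → ℝ)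
    (hmono : ∀ i : ℕ, 1 ≤ i → i < k → A (i + 1) ≤ A i)
    (hnonneg : 0 ≤ A k)
    (htop : A (k + 1) = 0)
    (hineq : ∀ j : ℕ, 1 ≤ j → j ≤ k →
      ∑ i ∈ Finset.Icc 1 j, A i ≤ max ((j : ℝ) * A (j + 1)) ((j : ℝ) - 1) + (j : ℝ))
    (hbal : A 1 = A 2) :
    A 1 ≤ harmonicR (k - 1) + 1 / 2 :=
  stmt_4_general k hk A htop hineq hbal
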